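/- arXiv:2310.12355 — 2 statements merged into one kernel-verified Lean document; each statement's English description precedes it below -/
import Mathlib

section
/- For all n ≥ 4 and all p ∈ (0,1): E_{n,p}[ 1_{{2 ∉ C(1)}} · d(2) · 1_{d(1)≥1}/d(1) ] = (p/(n−1)) · E_{n,p}[ (1_{d(1)≥1}/d(1)) · (n−1−|C(1)|) · (n−|C(1)|) ]. -/
open MeasureTheory Filter
open scoped Classical

namespace ERW

/-- Bernoulli measure on `Bool` with success probability `p`. -/
noncomputable def bern (p : ℝ) : Measure Bool :=
  (ENNReal.ofReal p) • Measure.dirac true + (ENNReal.ofReal (1 - p)) • Measure.dirac false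

/-- The Erdős–Rényi measure: each potential edge (unordered pair of vertices) is present
independently with probability `p`. -/
noncomputable def erMeasure (n : ℕ) (p : ℝ) : Measure (Sym2 (Fin n) → Bool) :=
  Measure.pi fun _ => bern p

/-- The graph determined by an edge configuration `ω` (diagonal coordinates are ignored). -/
def graphOf {n : ℕ} (ω : Sym2 (Fin n) → Bool) : SimpleGraph (Fin n) where
  Adj i j := i ≠ j ∧ ω s(i, j) = true
  symm := by
    constructor
    intro i j h
    exact ⟨h.1.symm, Sym2.eq_swap (a := j) ▸ h.2⟩
  loopless := by constructor; intro i h; exact h.1 rfl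

/-- The degree `d(v)` of vertex `v`. -/
noncomputable def deg {n : ℕ} (ω : Sym2 (Fin n) → Bool) (v : Fin n) : ℕ :=
  Set.ncard {u | (graphOf ω).Adj v u}

/-- The random variable `1_{d(v) ≥ 1} / d(v)`. -/
noncomputable def invDeg {n : ℕ} (ω : Sym2 (Fin n) → Bool) (v : Fin n) : ℝ :=
  if deg ω v = 0 then 0 else 1 / (deg ω v : ℝ)

/-- `|C(v)|`: the number of vertices in the connected component of `v`. -/
noncomputable def compSize {n : ℕ} (ω : Sym2 (Fin n) → Bool) (v : Fin n) : ℕ :=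
  Set.ncard {u | (graphOf ω).Reachable v u}

/-- `|E(C(v))|`: the number of present edges with both endpoints in the component of `v`. -/
noncomputable def edgesInComp {n : ℕ} (ω : Sym2 (Fin n) → Bool) (v : Fin n) : ℕ :=
  Set.ncard {e : Sym2 (Fin n) | e ∈ (graphOf ω).edgeSet ∧ ∀ u ∈ e, (graphOf ω).Reachable v u}

/-- `T(n,p) = E_{n,p}[ 2|E(C(1))| ⋅ 1_{d(1)≥1}/d(1) + 1_{d(1)=0} ]`, the expected first return
time to vertex `1` (here vertex `⟨0,_⟩`) of a simple random walk on `G(n,p)`. -/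
noncomputable def T (n : ℕ) (p : ℝ) : ℝ :=
  if h : 0 < n then
    ∫ ω, (2 * (edgesInComp ω ⟨0, h⟩ : ℝ) * invDeg ω ⟨0, h⟩
      + (if deg ω ⟨0, h⟩ = 0 then 1 else 0)) ∂(erMeasure n p)
  else 0

/-! ### Auxiliary development -/

/-- The weight of a single coordinate. -/
noncomputable def bw (p : ℝ) (b : Bool) : ℝ := if b then p else 1 - p

/-- The weight (probability) of a configuration. -/
noncomputable def wgt {n : ℕ} (p : ℝ) (ω : Sym2 (Fin n) → Bool) : ℝ := ∏ e, bw p (ω e)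

lemma bern_prob {p : ℝ} (h0 : 0 ≤ p) (h1 : p ≤ 1) : IsProbabilityMeasure (bern p) := by
  constructor
  simp [bern, Measure.dirac_apply]
  rw [← ENNReal.ofReal_add h0 (by linarith), ← ENNReal.ofReal_one]
  congr 1; ring

lemma bern_singleton (p : ℝ) (b : Bool) : bern p {b} = ENNReal.ofReal (bw p b) := by
  cases b <;> simp [bern, Measure.dirac_apply, bw]

lemma wgt_nonneg {n : ℕ} {p : ℝ} (h0 : 0 ≤ p) (h1 : p ≤ 1) (ω : Sym2 (Fin n) → Bool) :
    0 ≤ wgt p ω := by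
  apply Finset.prod_nonneg
  intro e _
  cases ω e <;> simp [bw] <;> linarith

lemma erMeasure_singleton {n : ℕ} {p : ℝ} (h0 : 0 ≤ p) (h1 : p ≤ 1)
    (ω : Sym2 (Fin n) → Bool) : erMeasure n p {ω} = ENNReal.ofReal (wgt p ω) := by
  haveI := bern_prob h0 h1
  rw [erMeasure, ← Set.univ_pi_singleton, Measure.pi_pi]
  rw [show wgt p ω = ∏ e, bw p (ω e) from rfl]
  rw [ENNReal.ofReal_prod_of_nonneg (fun e _ => by cases ω e <;> simp [bw] <;> linarith)]
  exact Finset.prod_congr rfl fun e _ => bern_singleton p (ω e)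

lemma integral_erMeasure {n : ℕ} {p : ℝ} (h0 : 0 ≤ p) (h1 : p ≤ 1)
    (f : (Sym2 (Fin n) → Bool) → ℝ) :
    ∫ ω, f ω ∂(erMeasure n p) = ∑ ω, wgt p ω * f ω := by
  haveI := bern_prob h0 h1
  haveI : IsProbabilityMeasure (erMeasure n p) := by
    rw [erMeasure]; infer_instance
  rw [integral_fintype (Integrable.of_finite)]
  refine Finset.sum_congr rfl fun ω _ => ?_
  rw [measureReal_def, erMeasure_singleton h0 h1, ENNReal.toReal_ofReal (wgt_nonneg h0 h1 ω)]
  simp [smul_eq_mul]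

/-! #### Edge conditioning -/

lemma sum_wgt_edge {n : ℕ} (p : ℝ) (e : Sym2 (Fin n)) (h : (Sym2 (Fin n) → Bool) → ℝ)
    (hh : ∀ ω b, h (Function.update ω e b) = h ω) :
    ∑ ω : Sym2 (Fin n) → Bool, wgt p ω * ((if ω e = true then 1 else 0) * h ω)
      = p * ∑ ω : Sym2 (Fin n) → Bool, wgt p ω * h ω := by
  set W : (Sym2 (Fin n) → Bool) → ℝ := fun ω => ∏ e' ∈ Finset.univ.erase e, bw p (ω e') with hW
  have hwgt : ∀ ω : Sym2 (Fin n) → Bool, wgt p ω = bw p (ω e) * W ω := fun ω =>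
    (Finset.mul_prod_erase Finset.univ _ (Finset.mem_univ e)).symm
  have hWupd : ∀ (ω : Sym2 (Fin n) → Bool) (b : Bool), W (Function.update ω e b) = W ω := by
    intro ω b
    refine Finset.prod_congr rfl fun e' he' => ?_
    rw [Function.update_of_ne (Finset.ne_of_mem_erase he')]
  have key : ∀ (b : Bool), ∑ ω ∈ Finset.univ.filter (fun ω : Sym2 (Fin n) → Bool => ω e = b),
      W ω * h ω = ∑ ω ∈ Finset.univ.filter (fun ω : Sym2 (Fin n) → Bool => ω e = true),
      W ω * h ω := by
    intro b
    refine Finset.sum_nbij' (fun ω => Function.update ω e true)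
      (fun ω => Function.update ω e b) ?_ ?_ ?_ ?_ ?_
    · intro ω hω; simp [Function.update_self]
    · intro ω hω; simp [Function.update_self]
    · intro ω hω
      simp only [Finset.mem_filter] at hω
      funext x
      rcases eq_or_ne x e with rfl | hx
      · simp [Function.update_self, hω.2]
      · simp [Function.update_of_ne hx]
    · intro ω hω
      simp only [Finset.mem_filter] at hω
      funext x
      rcases eq_or_ne x e with rfl | hx
      · simp [Function.update_self, hω.2]
      · simp [Function.update_of_ne hx]
    · intro ω hω
      rw [hWupd, hh]
  have lhs_eq : ∑ ω : Sym2 (Fin n) → Bool, wgt p ω * ((if ω e = true then 1 else 0) * h ω)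
      = p * ∑ ω ∈ Finset.univ.filter (fun ω : Sym2 (Fin n) → Bool => ω e = true),
        W ω * h ω := by
    rw [Finset.mul_sum, ← Finset.sum_filter_add_sum_filter_not Finset.univ
      (fun ω : Sym2 (Fin n) → Bool => ω e = true)]
    have h2 : ∑ ω ∈ Finset.univ.filter (fun ω : Sym2 (Fin n) → Bool => ¬ω e = true),
        wgt p ω * ((if ω e = true then 1 else 0) * h ω) = 0 := by
      refine Finset.sum_eq_zero fun ω hω => ?_
      simp only [Finset.mem_filter] at hω
      simp [hω.2]
    rw [h2, add_zero]
    refine Finset.sum_congr rfl fun ω hω => ?_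
    simp only [Finset.mem_filter] at hω
    rw [hwgt, hω.2]
    simp [bw]
    ring
  rw [lhs_eq]
  congr 1
  rw [← Finset.sum_filter_add_sum_filter_not Finset.univ
    (fun ω : Sym2 (Fin n) → Bool => ω e = true)]
  have hfalse : (Finset.univ.filter (fun ω : Sym2 (Fin n) → Bool => ¬ω e = true))
      = Finset.univ.filter (fun ω : Sym2 (Fin n) → Bool => ω e = false) := by
    ext ω; simp
  have h3 : ∀ b : Bool, ∑ ω ∈ Finset.univ.filter (fun ω : Sym2 (Fin n) → Bool => ω e = b),
      wgt p ω * h ω = bw p b * ∑ ω ∈ Finset.univ.filter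
        (fun ω : Sym2 (Fin n) → Bool => ω e = true), W ω * h ω := by
    intro b
    rw [← key b, Finset.mul_sum]
    refine Finset.sum_congr rfl fun ω hω => ?_
    simp only [Finset.mem_filter] at hω
    rw [hwgt, hω.2]; ring
  rw [hfalse, h3 true, h3 false]
  simp [bw]; ring

/-! #### The component as a finset, locality -/

noncomputable def reachF {n : ℕ} (ω : Sym2 (Fin n) → Bool) (v : Fin n) : Finset (Fin n) :=
  Finset.univ.filter fun u => (graphOf ω).Reachable v u

lemma mem_reachF {n : ℕ} {ω : Sym2 (Fin n) → Bool} {v u : Fin n} :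
    u ∈ reachF ω v ↔ (graphOf ω).Reachable v u := by simp [reachF]

lemma compSize_eq {n : ℕ} (ω : Sym2 (Fin n) → Bool) (v : Fin n) :
    compSize ω v = (reachF ω v).card := by
  rw [compSize, show {u | (graphOf ω).Reachable v u} = ↑(reachF ω v) by
    ext u; simp [mem_reachF], Set.ncard_coe_finset]

lemma self_mem_reachF {n : ℕ} (ω : Sym2 (Fin n) → Bool) (v : Fin n) :
    v ∈ reachF ω v := mem_reachF.mpr (SimpleGraph.Reachable.refl v)

lemma reachF_eq_of_agree {n : ℕ} {ω ω' : Sym2 (Fin n) → Bool} {v : Fin n} {S : Finset (Fin n)}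
    (hagree : ∀ e : Sym2 (Fin n), (∃ x ∈ e, x ∈ S) → ω e = ω' e)
    (hS : reachF ω v = S) : reachF ω' v = S := by
  have hv : v ∈ S := hS ▸ self_mem_reachF ω v
  have claim1 : ∀ u, (graphOf ω).Reachable v u → (graphOf ω').Reachable v u := by
    intro u hu
    rw [SimpleGraph.reachable_iff_reflTransGen] at hu ⊢
    induction hu with
    | refl => exact Relation.ReflTransGen.refl
    | tail hab hbc ih =>
      rename_i b c
      have hbS : b ∈ S := hS ▸ mem_reachF.mpr
        (SimpleGraph.reachable_iff_reflTransGen _ _ |>.mpr hab)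
      have he : ω s(b, c) = ω' s(b, c) := hagree _ ⟨b, by simp, hbS⟩
      exact ih.tail ⟨hbc.1, he ▸ hbc.2⟩
  have claim2 : ∀ u, (graphOf ω').Reachable v u → u ∈ S := by
    intro u hu
    rw [SimpleGraph.reachable_iff_reflTransGen] at hu
    induction hu with
    | refl => exact hv
    | tail hab hbc ih =>
      rename_i b c
      have he : ω s(b, c) = ω' s(b, c) := hagree _ ⟨b, by simp, ih⟩
      have hreach : (graphOf ω).Reachable v b := mem_reachF.mp (hS ▸ ih)
      have : (graphOf ω).Reachable v c := hreach.trans ⟨SimpleGraph.Walk.cons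
        ⟨hbc.1, he ▸ hbc.2⟩ SimpleGraph.Walk.nil⟩
      exact hS ▸ mem_reachF.mpr this
  ext u
  constructor
  · intro hu; exact claim2 u (mem_reachF.mp hu)
  · intro hu
    exact mem_reachF.mpr (claim1 u (mem_reachF.mp (hS ▸ hu)))

lemma reachF_update_iff {n : ℕ} {ω : Sym2 (Fin n) → Bool} {v : Fin n} {S : Finset (Fin n)}
    {e : Sym2 (Fin n)} (he : ∀ x ∈ e, x ∉ S) (b : Bool) :
    reachF (Function.update ω e b) v = S ↔ reachF ω v = S := by
  have hagree : ∀ e' : Sym2 (Fin n), (∃ x ∈ e', x ∈ S) →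
      ω e' = Function.update ω e b e' := by
    intro e' ⟨x, hx, hxS⟩
    have : e' ≠ e := fun h => he x (h ▸ hx) hxS
    rw [Function.update_of_ne this]
  constructor
  · intro h
    exact reachF_eq_of_agree (fun e' h' => (hagree e' h').symm) h
  · intro h
    exact reachF_eq_of_agree hagree h

lemma deg_update {n : ℕ} {ω : Sym2 (Fin n) → Bool} {v : Fin n} {e : Sym2 (Fin n)}
    (hv : v ∉ e) (b : Bool) : deg (Function.update ω e b) v = deg ω v := by
  unfold deg
  congr 1
  ext u
  have : s(v, u) ≠ e := fun h => hv (h ▸ Sym2.mem_mk_left v u)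
  simp [graphOf, Function.update_of_ne this]

lemma invDeg_update {n : ℕ} {ω : Sym2 (Fin n) → Bool} {v : Fin n} {e : Sym2 (Fin n)}
    (hv : v ∉ e) (b : Bool) : invDeg (Function.update ω e b) v = invDeg ω v := by
  unfold invDeg
  rw [deg_update hv]

/-! #### Permutation symmetry -/

def pEquiv {n : ℕ} (π : Equiv.Perm (Fin n)) : Sym2 (Fin n) ≃ Sym2 (Fin n) where
  toFun := Sym2.map π
  invFun := Sym2.map π.symm
  left_inv := fun x => by
    rw [Sym2.map_map]
    simp only [Equiv.symm_comp_self]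
    exact congrFun Sym2.map_id x
  right_inv := fun x => by
    rw [Sym2.map_map]
    simp only [Equiv.self_comp_symm]
    exact congrFun Sym2.map_id x

def cEquiv {n : ℕ} (π : Equiv.Perm (Fin n)) :
    (Sym2 (Fin n) → Bool) ≃ (Sym2 (Fin n) → Bool) :=
  Equiv.arrowCongr (pEquiv π).symm (Equiv.refl Bool)

lemma wgt_comp {n : ℕ} (p : ℝ) (π : Equiv.Perm (Fin n)) (ω : Sym2 (Fin n) → Bool) :
    wgt p (ω ∘ Sym2.map π) = wgt p ω := by
  unfold wgt
  exact Fintype.prod_equiv (pEquiv π) _ _ (fun e => rfl)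

lemma adj_comp {n : ℕ} (π : Equiv.Perm (Fin n)) (ω : Sym2 (Fin n) → Bool) (i j : Fin n) :
    (graphOf (ω ∘ Sym2.map π)).Adj i j ↔ (graphOf ω).Adj (π i) (π j) := by
  simp only [graphOf, Function.comp_apply, Sym2.map_pair_eq]
  constructor
  · rintro ⟨h1, h2⟩; exact ⟨fun h => h1 (π.injective h), h2⟩
  · rintro ⟨h1, h2⟩; exact ⟨fun h => h1 (h ▸ rfl), h2⟩

def isoComp {n : ℕ} (π : Equiv.Perm (Fin n)) (ω : Sym2 (Fin n) → Bool) :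
    graphOf (ω ∘ Sym2.map π) ≃g graphOf ω where
  toEquiv := π
  map_rel_iff' := by
    intro i j
    exact (adj_comp π ω i j).symm

lemma reach_comp {n : ℕ} (π : Equiv.Perm (Fin n)) (ω : Sym2 (Fin n) → Bool) (i j : Fin n) :
    (graphOf (ω ∘ Sym2.map π)).Reachable i j ↔ (graphOf ω).Reachable (π i) (π j) :=
  (SimpleGraph.Iso.reachable_iff (φ := isoComp π ω) (u := i) (v := j)).symm

lemma compSize_comp {n : ℕ} (π : Equiv.Perm (Fin n)) (ω : Sym2 (Fin n) → Bool) (v : Fin n) :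
    compSize (ω ∘ Sym2.map π) v = compSize ω (π v) := by
  unfold compSize
  have : {u | (graphOf (ω ∘ Sym2.map π)).Reachable v u}
      = ⇑π.symm '' {u | (graphOf ω).Reachable (π v) u} := by
    ext u
    simp only [Set.mem_setOf_eq, Set.mem_image]
    constructor
    · intro h
      exact ⟨π u, (reach_comp π ω v u).mp h, π.symm_apply_apply u⟩
    · rintro ⟨x, hx, rfl⟩
      rw [reach_comp]
      rwa [π.apply_symm_apply]
  rw [this, Set.ncard_image_of_injective _ π.symm.injective]

lemma deg_comp {n : ℕ} (π : Equiv.Perm (Fin n)) (ω : Sym2 (Fin n) → Bool) (v : Fin n) :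
    deg (ω ∘ Sym2.map π) v = deg ω (π v) := by
  unfold deg
  have : {u | (graphOf (ω ∘ Sym2.map π)).Adj v u}
      = ⇑π.symm '' {u | (graphOf ω).Adj (π v) u} := by
    ext u
    simp only [Set.mem_setOf_eq, Set.mem_image]
    constructor
    · intro h
      exact ⟨π u, (adj_comp π ω v u).mp h, π.symm_apply_apply u⟩
    · rintro ⟨x, hx, rfl⟩
      rw [adj_comp]
      rwa [π.apply_symm_apply]
  rw [this, Set.ncard_image_of_injective _ π.symm.injective]

lemma invDeg_comp {n : ℕ} (π : Equiv.Perm (Fin n)) (ω : Sym2 (Fin n) → Bool) (v : Fin n) :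
    invDeg (ω ∘ Sym2.map π) v = invDeg ω (π v) := by
  unfold invDeg
  rw [deg_comp]

lemma sum_comp_perm {n : ℕ} (π : Equiv.Perm (Fin n)) (F : (Sym2 (Fin n) → Bool) → ℝ) :
    ∑ ω : Sym2 (Fin n) → Bool, F (ω ∘ Sym2.map π) = ∑ ω : Sym2 (Fin n) → Bool, F ω :=
  Equiv.sum_comp (cEquiv π) F

/-! #### Degree as a sum -/

lemma deg_eq_sum {n : ℕ} (ω : Sym2 (Fin n) → Bool) (v : Fin n) :
    (deg ω v : ℝ) = ∑ u ∈ Finset.univ.erase v, (if ω s(v, u) = true then (1 : ℝ) else 0) := by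
  have h1 : deg ω v = ∑ u ∈ Finset.univ.erase v,
      (if ω s(v, u) = true then (1 : ℕ) else 0) := by
    rw [deg]
    have h2 : {u | (graphOf ω).Adj v u}
        = ↑(Finset.univ.filter fun u => (graphOf ω).Adj v u) := by ext u; simp
    rw [h2, Set.ncard_coe_finset, Finset.card_filter]
    have hzero : (if (graphOf ω).Adj v v then (1 : ℕ) else 0) = 0 := by
      simp [graphOf]
    rw [← Finset.sum_erase (f := fun u : Fin n => if (graphOf ω).Adj v u then (1 : ℕ) else 0)
      Finset.univ hzero]
    refine Finset.sum_congr rfl fun u hu => ?_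
    have hvu : v ≠ u := fun h => (Finset.mem_erase.mp hu).1 h.symm
    simp [graphOf, hvu]
  rw [h1]
  push_cast
  rfl

/-- The auxiliary quantity `D S = Σ_ω w(ω) 1_{C(v0)=S} invDeg(v0)`. -/
noncomputable def Dfun (n : ℕ) (p : ℝ) (v0 : Fin n) (S : Finset (Fin n)) : ℝ :=
  ∑ ω : Sym2 (Fin n) → Bool,
    wgt p ω * ((if reachF ω v0 = S then (1 : ℝ) else 0) * invDeg ω v0)

/-! #### Lemma L: the conditioning step -/

lemma lemL {n : ℕ} (p : ℝ) (v0 v1 : Fin n) (h01 : v0 ≠ v1) :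
    ∑ ω : Sym2 (Fin n) → Bool, wgt p ω *
        ((if (graphOf ω).Reachable v0 v1 then (0 : ℝ) else 1) *
          ((deg ω v1 : ℝ) * invDeg ω v0))
    = p * ∑ ω : Sym2 (Fin n) → Bool, wgt p ω *
        ((if (graphOf ω).Reachable v0 v1 then (0 : ℝ) else 1) *
          (((n : ℝ) - 1 - (compSize ω v0 : ℝ)) * invDeg ω v0)) := by
  classical
  -- Per-edge computation
  have keyA : ∀ S : Finset (Fin n), v1 ∉ S → ∀ u ∈ Finset.univ.erase v1,
      ∑ ω : Sym2 (Fin n) → Bool, wgt p ω * ((if ω s(v1, u) = true then (1 : ℝ) else 0) *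
        ((if reachF ω v0 = S then (1 : ℝ) else 0) * invDeg ω v0))
      = if u ∈ S then 0 else p * Dfun n p v0 S := by
    intro S hv1 u hu
    have huv1 : u ≠ v1 := (Finset.mem_erase.mp hu).1
    by_cases huS : u ∈ S
    · rw [if_pos huS]
      refine Finset.sum_eq_zero fun ω _ => ?_
      by_cases hω : ω s(v1, u) = true
      · by_cases hr : reachF ω v0 = S
        · exfalso
          have hru : (graphOf ω).Reachable v0 u := mem_reachF.mp (hr ▸ huS)
          have hadj : (graphOf ω).Adj u v1 := ⟨huv1, by rwa [Sym2.eq_swap]⟩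
          have : (graphOf ω).Reachable v0 v1 := hru.trans hadj.reachable
          exact hv1 (hr ▸ mem_reachF.mpr this)
        · simp [hr]
      · simp [hω]
    · rw [if_neg huS]
      have hinv : ∀ (ω : Sym2 (Fin n) → Bool) (b : Bool),
          (fun ω => (if reachF ω v0 = S then (1 : ℝ) else 0) * invDeg ω v0)
            (Function.update ω s(v1, u) b)
          = (fun ω => (if reachF ω v0 = S then (1 : ℝ) else 0) * invDeg ω v0) ω := by
        intro ω b
        simp only
        have hes : ∀ x ∈ s(v1, u), x ∉ S := by
          intro x hx
          rcases Sym2.mem_iff.mp hx with rfl | rfl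
          exacts [hv1, huS]
        rw [if_congr (reachF_update_iff hes b) rfl rfl]
        by_cases hv0 : v0 ∈ S
        · have hv0e : v0 ∉ s(v1, u) := fun hx => hes v0 hx hv0
          rw [invDeg_update hv0e]
        · have hne : ∀ ω' : Sym2 (Fin n) → Bool, reachF ω' v0 ≠ S := fun ω' h =>
            hv0 (h ▸ self_mem_reachF ω' v0)
          rw [if_neg (hne ω)]
          ring
      exact sum_wgt_edge p s(v1, u)
        (fun ω => (if reachF ω v0 = S then (1 : ℝ) else 0) * invDeg ω v0) hinv
  -- Pointwise partition of the left-hand summand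
  have hptL : ∀ ω : Sym2 (Fin n) → Bool, wgt p ω *
      ((if (graphOf ω).Reachable v0 v1 then (0 : ℝ) else 1) *
        ((deg ω v1 : ℝ) * invDeg ω v0))
      = ∑ u ∈ Finset.univ.erase v1, ∑ S : Finset (Fin n),
          (if v1 ∈ S then (0 : ℝ) else 1) *
          (wgt p ω * ((if ω s(v1, u) = true then (1 : ℝ) else 0) *
            ((if reachF ω v0 = S then (1 : ℝ) else 0) * invDeg ω v0))) := by
    intro ω
    have hS : ∀ u : Fin n, ∑ S : Finset (Fin n), (if v1 ∈ S then (0 : ℝ) else 1) *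
        (wgt p ω * ((if ω s(v1, u) = true then (1 : ℝ) else 0) *
          ((if reachF ω v0 = S then (1 : ℝ) else 0) * invDeg ω v0)))
        = (if v1 ∈ reachF ω v0 then (0 : ℝ) else 1) *
          (wgt p ω * ((if ω s(v1, u) = true then (1 : ℝ) else 0) * invDeg ω v0)) := by
      intro u
      rw [Finset.sum_eq_single (reachF ω v0)]
      · simp
      · intro S _ hSne
        rw [if_neg (fun h : reachF ω v0 = S => hSne h.symm)]
        ring
      · intro h; exact absurd (Finset.mem_univ _) h
    rw [Finset.sum_congr rfl fun u _ => hS u]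
    have hiff : ((graphOf ω).Reachable v0 v1) ↔ v1 ∈ reachF ω v0 := mem_reachF.symm
    rw [if_congr hiff rfl rfl, deg_eq_sum]
    rw [Finset.sum_mul, Finset.mul_sum, Finset.mul_sum]
    exact Finset.sum_congr rfl fun u _ => by ring
  -- Pointwise partition of the right-hand summand
  have hptR : ∀ ω : Sym2 (Fin n) → Bool, wgt p ω *
      ((if (graphOf ω).Reachable v0 v1 then (0 : ℝ) else 1) *
        (((n : ℝ) - 1 - (compSize ω v0 : ℝ)) * invDeg ω v0))
      = ∑ S : Finset (Fin n), (if v1 ∈ S then (0 : ℝ) else 1) *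
          (((n : ℝ) - 1 - (S.card : ℝ)) *
            (wgt p ω * ((if reachF ω v0 = S then (1 : ℝ) else 0) * invDeg ω v0))) := by
    intro ω
    rw [Finset.sum_eq_single (reachF ω v0)]
    · have hiff : ((graphOf ω).Reachable v0 v1) ↔ v1 ∈ reachF ω v0 := mem_reachF.symm
      rw [if_congr hiff rfl rfl, if_pos rfl, compSize_eq]
      ring
    · intro S _ hSne
      rw [if_neg (fun h : reachF ω v0 = S => hSne h.symm)]
      ring
    · intro h; exact absurd (Finset.mem_univ _) h
  -- The u-count per S
  have keyC : ∀ S : Finset (Fin n), v1 ∉ S →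
      ∑ u ∈ Finset.univ.erase v1, (if u ∈ S then (0 : ℝ) else p * Dfun n p v0 S)
      = ((n : ℝ) - 1 - (S.card : ℝ)) * (p * Dfun n p v0 S) := by
    intro S hv1
    have hrw : ∀ u : Fin n, (if u ∈ S then (0 : ℝ) else p * Dfun n p v0 S)
        = if u ∉ S then p * Dfun n p v0 S else 0 := by
      intro u; by_cases h : u ∈ S <;> simp [h]
    rw [Finset.sum_congr rfl fun u _ => hrw u, ← Finset.sum_filter, Finset.sum_const,
      nsmul_eq_mul]
    congr 1
    have hSsub : S ⊆ Finset.univ.erase v1 := fun x hx =>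
      Finset.mem_erase.mpr ⟨fun h => hv1 (h ▸ hx), Finset.mem_univ x⟩
    have hfil : (Finset.univ.erase v1).filter (fun u => u ∉ S)
        = (Finset.univ.erase v1) \ S := by
      ext x
      simp only [Finset.mem_filter, Finset.mem_sdiff]
    rw [hfil, Finset.card_sdiff_of_subset hSsub, Finset.card_erase_of_mem (Finset.mem_univ v1),
      Finset.card_univ, Fintype.card_fin]
    have hn1 : 1 ≤ n := Nat.lt_of_le_of_lt (Nat.zero_le _) v1.isLt
    have hcard : S.card ≤ n - 1 := by
      have := Finset.card_le_card hSsub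
      rwa [Finset.card_erase_of_mem (Finset.mem_univ v1), Finset.card_univ,
        Fintype.card_fin] at this
    rw [Nat.cast_sub hcard, Nat.cast_sub hn1]
    norm_num
  -- Assemble
  rw [Finset.sum_congr rfl fun ω _ => hptL ω, Finset.sum_comm]
  have keyB : ∀ u ∈ Finset.univ.erase v1,
      (∑ ω : Sym2 (Fin n) → Bool, ∑ S : Finset (Fin n),
        (if v1 ∈ S then (0 : ℝ) else 1) *
        (wgt p ω * ((if ω s(v1, u) = true then (1 : ℝ) else 0) *
          ((if reachF ω v0 = S then (1 : ℝ) else 0) * invDeg ω v0))))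
      = ∑ S : Finset (Fin n), (if v1 ∈ S then (0 : ℝ) else 1) *
          (if u ∈ S then 0 else p * Dfun n p v0 S) := by
    intro u hu
    rw [Finset.sum_comm]
    refine Finset.sum_congr rfl fun S _ => ?_
    rw [← Finset.mul_sum]
    by_cases hv1 : v1 ∈ S
    · simp [hv1]
    · rw [if_neg hv1, keyA S hv1 u hu]
  rw [Finset.sum_congr rfl keyB, Finset.sum_comm]
  have step2 : ∀ S : Finset (Fin n),
      (∑ u ∈ Finset.univ.erase v1, (if v1 ∈ S then (0 : ℝ) else 1) *
        (if u ∈ S then 0 else p * Dfun n p v0 S))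
      = (if v1 ∈ S then (0 : ℝ) else 1) *
          (((n : ℝ) - 1 - (S.card : ℝ)) * (p * Dfun n p v0 S)) := by
    intro S
    rw [← Finset.mul_sum]
    by_cases hv1 : v1 ∈ S
    · simp [hv1]
    · rw [if_neg hv1, keyC S hv1]
  rw [Finset.sum_congr rfl fun S _ => step2 S]
  rw [Finset.sum_congr rfl fun ω _ => hptR ω, Finset.sum_comm, Finset.mul_sum]
  refine Finset.sum_congr rfl fun S _ => ?_
  rw [← Finset.mul_sum, ← Finset.mul_sum]
  unfold Dfun
  ring

/-! #### Lemma M: the symmetry step -/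

lemma lemM {n : ℕ} (p : ℝ) (v0 v1 : Fin n) (h01 : v0 ≠ v1) :
    ∑ ω : Sym2 (Fin n) → Bool, wgt p ω * (invDeg ω v0 *
        (((n : ℝ) - 1 - (compSize ω v0 : ℝ)) * ((n : ℝ) - (compSize ω v0 : ℝ))))
    = ((n : ℝ) - 1) * ∑ ω : Sym2 (Fin n) → Bool, wgt p ω *
        ((if (graphOf ω).Reachable v0 v1 then (0 : ℝ) else 1) *
          (((n : ℝ) - 1 - (compSize ω v0 : ℝ)) * invDeg ω v0)) := by
  classical
  have hn1 : 1 ≤ n := Nat.lt_of_le_of_lt (Nat.zero_le _) v0.isLt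
  -- counting lemma
  have hcount : ∀ ω : Sym2 (Fin n) → Bool, ((n : ℝ) - (compSize ω v0 : ℝ))
      = ∑ v ∈ Finset.univ.erase v0,
          (if (graphOf ω).Reachable v0 v then (0 : ℝ) else 1) := by
    intro ω
    have h1 : ∑ v ∈ Finset.univ.erase v0,
        (if (graphOf ω).Reachable v0 v then (0 : ℝ) else 1)
        = ∑ v : Fin n, (if (graphOf ω).Reachable v0 v then (0 : ℝ) else 1) := by
      exact Finset.sum_erase Finset.univ (if_pos (SimpleGraph.Reachable.refl v0))
    rw [h1]
    have h2 : ∑ v : Fin n, (if (graphOf ω).Reachable v0 v then (0 : ℝ) else 1)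
        = ((Finset.univ.filter (fun v => ¬ (graphOf ω).Reachable v0 v)).card : ℝ) := by
      rw [Finset.card_filter]
      push_cast
      refine Finset.sum_congr rfl fun v _ => ?_
      by_cases h : (graphOf ω).Reachable v0 v <;> simp [h]
    rw [h2]
    have h3 : (Finset.univ.filter (fun v => ¬ (graphOf ω).Reachable v0 v)).card
        = n - compSize ω v0 := by
      rw [compSize_eq, Finset.filter_not, Finset.card_sdiff_of_subset (Finset.filter_subset _ _)]
      rw [Finset.card_univ, Fintype.card_fin]
      rfl
    rw [h3]
    have h4 : compSize ω v0 ≤ n := by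
      rw [compSize_eq]
      calc (reachF ω v0).card ≤ Finset.univ.card := Finset.card_le_card (Finset.subset_univ _)
        _ = n := by rw [Finset.card_univ, Fintype.card_fin]
    rw [Nat.cast_sub h4]
  have expand : ∀ ω : Sym2 (Fin n) → Bool, wgt p ω * (invDeg ω v0 *
      (((n : ℝ) - 1 - (compSize ω v0 : ℝ)) * ((n : ℝ) - (compSize ω v0 : ℝ))))
      = ∑ v ∈ Finset.univ.erase v0, wgt p ω *
          ((if (graphOf ω).Reachable v0 v then (0 : ℝ) else 1) *
            (((n : ℝ) - 1 - (compSize ω v0 : ℝ)) * invDeg ω v0)) := by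
    intro ω
    rw [hcount ω, Finset.mul_sum, Finset.mul_sum, Finset.mul_sum]
    exact Finset.sum_congr rfl fun v _ => by ring
  rw [Finset.sum_congr rfl fun ω _ => expand ω, Finset.sum_comm]
  have hKv : ∀ v ∈ Finset.univ.erase v0,
      (∑ ω : Sym2 (Fin n) → Bool, wgt p ω *
        ((if (graphOf ω).Reachable v0 v then (0 : ℝ) else 1) *
          (((n : ℝ) - 1 - (compSize ω v0 : ℝ)) * invDeg ω v0)))
      = ∑ ω : Sym2 (Fin n) → Bool, wgt p ω *
        ((if (graphOf ω).Reachable v0 v1 then (0 : ℝ) else 1) *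
          (((n : ℝ) - 1 - (compSize ω v0 : ℝ)) * invDeg ω v0)) := by
    intro v hv
    have hvne : v ≠ v0 := (Finset.mem_erase.mp hv).1
    set π := Equiv.swap v1 v with hπ
    have hπ0 : π v0 = v0 := Equiv.swap_apply_of_ne_of_ne h01 (Ne.symm hvne)
    have hπv : π v = v1 := Equiv.swap_apply_right v1 v
    have := sum_comp_perm π (fun ω => wgt p ω *
        ((if (graphOf ω).Reachable v0 v then (0 : ℝ) else 1) *
          (((n : ℝ) - 1 - (compSize ω v0 : ℝ)) * invDeg ω v0)))
    rw [← this]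
    refine Finset.sum_congr rfl fun ω _ => ?_
    simp only [wgt_comp, invDeg_comp, compSize_comp, hπ0]
    rw [if_congr (reach_comp π ω v0 v) rfl rfl, hπ0, hπv]
  rw [Finset.sum_congr rfl hKv, Finset.sum_const,
    Finset.card_erase_of_mem (Finset.mem_univ v0), Finset.card_univ, Fintype.card_fin,
    nsmul_eq_mul, Nat.cast_sub hn1]
  norm_num

/-! #### The main theorem -/

lemma final_sum {n : ℕ} (hn : 4 ≤ n) (p : ℝ) (v0 v1 : Fin n) (h01 : v0 ≠ v1) :
    ∑ ω : Sym2 (Fin n) → Bool, wgt p ω *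
        ((if (graphOf ω).Reachable v0 v1 then (0 : ℝ) else 1) *
          ((deg ω v1 : ℝ) * invDeg ω v0))
    = (p / ((n : ℝ) - 1)) * ∑ ω : Sym2 (Fin n) → Bool, wgt p ω *
        (invDeg ω v0 * (((n : ℝ) - 1 - (compSize ω v0 : ℝ)) *
          ((n : ℝ) - (compSize ω v0 : ℝ)))) := by
  rw [lemL p v0 v1 h01, lemM p v0 v1 h01]
  have hn1 : ((n : ℝ) - 1) ≠ 0 := by
    have : (4 : ℝ) ≤ (n : ℝ) := by exact_mod_cast hn
    linarith
  field_simp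

/-- Computation of `E_{n,p}[ 1_{2∉C(1)} d(2) ⋅ 1_{d(1)≥1}/d(1) ]` (Lemma `lem:main`,
third display). -/
theorem stmt_8 (n : ℕ) (hn : 4 ≤ n) (p : ℝ) (hp : p ∈ Set.Ioo (0 : ℝ) 1) :
    ∫ ω, (if (graphOf ω).Reachable ⟨0, by omega⟩ ⟨1, by omega⟩ then (0 : ℝ) else 1) *
        ((deg ω ⟨1, by omega⟩ : ℝ) * invDeg ω ⟨0, by omega⟩) ∂(erMeasure n p) =
      (p / ((n : ℝ) - 1)) *
        ∫ ω, invDeg ω ⟨0, by omega⟩ *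
          (((n : ℝ) - 1 - (compSize ω ⟨0, by omega⟩ : ℝ)) *
            ((n : ℝ) - (compSize ω ⟨0, by omega⟩ : ℝ))) ∂(erMeasure n p) := by
  obtain ⟨hp0, hp1⟩ := hp
  rw [integral_erMeasure (le_of_lt hp0) (le_of_lt hp1),
    integral_erMeasure (le_of_lt hp0) (le_of_lt hp1)]
  have h01 : (⟨0, by omega⟩ : Fin n) ≠ ⟨1, by omega⟩ := by
    simp [Fin.ext_iff]
  exact final_sum hn p _ _ h01

end ERW
end

section
/- Fix λ ∈ (0,1). Then there exists a constant C > 0 such that for all n ≥ 2, P_{n,λ/n}( 2 ∈ C(1) ) ≤ C/n. -/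
open MeasureTheory Filter
open scoped Classical
open scoped ENNReal

namespace ERW

instance bern_fin (p : ℝ) : IsFiniteMeasure (bern p) := by
  constructor
  simp [bern]

lemma bern_true (p : ℝ) : bern p {true} = ENNReal.ofReal p := by
  simp [bern, Measure.dirac_apply' _ (measurableSet_singleton _)]

lemma bern_univ {p : ℝ} (h0 : 0 ≤ p) (h1 : p ≤ 1) : bern p Set.univ = 1 := by
  simp [bern, ← ENNReal.ofReal_add h0 (by linarith : (0:ℝ) ≤ 1 - p)]

private lemma support_inj {V : Type*} {G : SimpleGraph V} {u v : V} (w : G.Walk u v) :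
    ∀ w' : G.Walk u v, w.support = w'.support → w = w' := by
  induction w with
  | nil =>
    intro w' h
    cases w' with
    | nil => rfl
    | cons hadj' p' =>
      have := congrArg List.length h
      simp [SimpleGraph.Walk.length_support] at this
  | cons hadj p ih =>
    intro w' h
    cases w' with
    | nil =>
      have := congrArg List.length h
      simp [SimpleGraph.Walk.length_support] at this
    | cons hadj' p' =>
      have h2 := h
      rw [SimpleGraph.Walk.support_cons, SimpleGraph.Walk.support_cons,
        SimpleGraph.Walk.support_eq_cons p, SimpleGraph.Walk.support_eq_cons p',
        List.cons.injEq, List.cons.injEq] at h2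
      obtain ⟨-, hb, -⟩ := h2
      subst hb
      rw [SimpleGraph.Walk.support_cons, SimpleGraph.Walk.support_cons, List.cons.injEq] at h
      rw [ih p' h.2]

private lemma key {l : ℝ} (hl0 : 0 < l) (hl1 : l < 1) (n : ℕ) (hn : 2 ≤ n)
    (i j : Fin n) (hij : i ≠ j) :
    ((erMeasure n (l / n)) {ω | (graphOf ω).Reachable i j}).toReal ≤ (1 / (1 - l)) / n := by
  have hn0 : (0:ℝ) < n := by
    have : (0:ℕ) < n := by omega
    exact_mod_cast this
  set p : ℝ := l / n with hpdef
  have hp0 : 0 ≤ p := le_of_lt (div_pos hl0 hn0)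
  have hp1 : p ≤ 1 := by
    rw [hpdef, div_le_one hn0]
    have h2 : (2:ℝ) ≤ n := by exact_mod_cast hn
    linarith
  set G : SimpleGraph (Fin n) := ⊤ with hG
  set P : ℕ → Finset (G.Walk i j) :=
    fun k => (G.finsetWalkLength k i j).filter (fun w => w.IsPath) with hP
  set A : G.Walk i j → Set (Sym2 (Fin n) → Bool) :=
    fun q => {ω | ∀ e ∈ q.edges, ω e = true} with hA
  have hmemP : ∀ {k} {q : G.Walk i j}, q ∈ P k → q.length = k ∧ q.IsPath := by
    intro k q hq
    rw [hP] at hq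
    simp only [Finset.mem_filter] at hq
    exact ⟨SimpleGraph.mem_finsetWalkLength_iff.mp hq.1, hq.2⟩
  -- covering
  have hcover : {ω | (graphOf ω).Reachable i j} ⊆ ⋃ k ∈ Finset.range n, ⋃ q ∈ P k, A q := by
    intro ω hω
    obtain ⟨w⟩ := hω
    set q : G.Walk i j := (w.toPath : (graphOf ω).Walk i j).mapLe le_top with hq
    have hqpath : q.IsPath := (w.toPath.isPath).mapLe _
    have hqedges : q.edges = (w.toPath : (graphOf ω).Walk i j).edges := by
      rw [hq]
      unfold SimpleGraph.Walk.mapLe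
      rw [SimpleGraph.Walk.edges_map]
      have : ⇑(SimpleGraph.Hom.ofLE (le_top (a := graphOf ω))) = fun x => x := rfl
      rw [this, Sym2.map_id', List.map_id]
    have hqlen : q.length < n := by
      have := hqpath.length_lt
      simpa [Fintype.card_fin] using this
    have hqP : q ∈ P q.length := by
      rw [hP]
      simp only [Finset.mem_filter]
      exact ⟨SimpleGraph.mem_finsetWalkLength_iff.2 rfl, hqpath⟩
    have hωA : ω ∈ A q := by
      intro e he
      rw [hqedges] at he
      have he' : e ∈ (graphOf ω).edgeSet :=
        SimpleGraph.Walk.edges_subset_edgeSet _ he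
      have hedge : ∀ a b : Fin n, s(a,b) ∈ (graphOf ω).edgeSet → ω s(a,b) = true := by
        intro a b hab
        have h3 : (graphOf ω).Adj a b := (SimpleGraph.mem_edgeSet _).mp hab
        exact h3.2
      exact Sym2.ind (f := fun e => e ∈ (graphOf ω).edgeSet → ω e = true) hedge e he'
    exact Set.mem_biUnion (Finset.mem_range.2 hqlen) (Set.mem_biUnion hqP hωA)
  -- measure of each cylinder event
  have hmeasA : ∀ k, ∀ q ∈ P k, erMeasure n p (A q) = (ENNReal.ofReal p) ^ k := by
    intro k q hq
    obtain ⟨hqlen, hqpath⟩ := hmemP hq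
    have hAeq : A q = Set.univ.pi
        (fun e => if e ∈ q.edges then ({true} : Set Bool) else Set.univ) := by
      ext ω
      simp only [hA, Set.mem_setOf_eq, Set.mem_pi, Set.mem_univ, forall_true_left]
      constructor
      · intro h e
        split_ifs with he
        · exact h e he
        · trivial
      · intro h e he
        have := h e
        rwa [if_pos he] at this
    rw [hAeq, erMeasure, Measure.pi_pi]
    have hval : ∀ e : Sym2 (Fin n),
        bern p (if e ∈ q.edges then ({true} : Set Bool) else Set.univ)
          = if e ∈ q.edges.toFinset then ENNReal.ofReal p else 1 := by
      intro e
      by_cases he : e ∈ q.edges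
      · rw [if_pos he, if_pos (List.mem_toFinset.2 he), bern_true]
      · rw [if_neg he, if_neg (fun hc => he (List.mem_toFinset.1 hc)), bern_univ hp0 hp1]
    simp_rw [hval]
    rw [Finset.prod_ite_mem, Finset.univ_inter, Finset.prod_const,
      List.toFinset_card_of_nodup hqpath.isTrail.edges_nodup,
      SimpleGraph.Walk.length_edges, hqlen]
  -- union bound
  have hle : erMeasure n p {ω | (graphOf ω).Reachable i j}
      ≤ ∑ k ∈ Finset.range n, ((P k).card : ℝ≥0∞) * (ENNReal.ofReal p) ^ k := by
    calc erMeasure n p {ω | (graphOf ω).Reachable i j}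
        ≤ erMeasure n p (⋃ k ∈ Finset.range n, ⋃ q ∈ P k, A q) := measure_mono hcover
      _ ≤ ∑ k ∈ Finset.range n, erMeasure n p (⋃ q ∈ P k, A q) :=
          measure_biUnion_finset_le _ _
      _ ≤ ∑ k ∈ Finset.range n, ∑ q ∈ P k, erMeasure n p (A q) :=
          Finset.sum_le_sum (fun k _ => measure_biUnion_finset_le _ _)
      _ = ∑ k ∈ Finset.range n, ((P k).card : ℝ≥0∞) * (ENNReal.ofReal p) ^ k := by
          refine Finset.sum_congr rfl fun k hk => ?_
          rw [Finset.sum_congr rfl (hmeasA k), Finset.sum_const, nsmul_eq_mul]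
  -- card bounds
  have hP0 : P 0 = ∅ := by
    refine Finset.eq_empty_of_forall_notMem fun w hw => ?_
    exact hij (SimpleGraph.Walk.eq_of_length_eq_zero (hmemP hw).1)
  have hcard : ∀ k, 1 ≤ k → (P k).card ≤ n ^ (k - 1) := by
    intro k hk
    set t : Finset (List (Fin n)) :=
      Finset.univ.image (fun v : List.Vector (Fin n) (k-1) => v.toList) with ht
    have hrec : ∀ r ∈ P k, r.support = i :: (r.support.tail.dropLast ++ [j]) := by
      intro r hr
      have hrlen : r.length = k := (hmemP hr).1
      have htl : r.support.tail ≠ [] := by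
        have hlen : r.support.tail.length = k := by
          simp [List.length_tail, SimpleGraph.Walk.length_support, hrlen]
        intro hnil
        rw [hnil] at hlen
        simp at hlen
        omega
      have h1 : r.support.tail.dropLast ++ [r.support.tail.getLast htl] = r.support.tail :=
        List.dropLast_append_getLast htl
      have h2 : r.support.tail.getLast htl = j := by
        rw [List.getLast_tail]
        exact r.getLast_support
      rw [h2] at h1
      rw [h1]
      exact SimpleGraph.Walk.support_eq_cons r
    have h1 : (P k).card ≤ t.card := by
      apply Finset.card_le_card_of_injOn (fun q => q.support.tail.dropLast)
      · intro q hq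
        have hqlen : q.length = k := (hmemP (Finset.mem_coe.mp hq)).1
        have hlenlist : (q.support.tail.dropLast).length = k - 1 := by
          simp [List.length_dropLast, List.length_tail, SimpleGraph.Walk.length_support, hqlen]
        rw [ht]
        exact Finset.mem_image.2 ⟨⟨_, hlenlist⟩, Finset.mem_univ _, rfl⟩
      · intro q hq q' hq' heq
        simp only at heq
        apply support_inj
        rw [hrec q (Finset.mem_coe.mp hq), hrec q' (Finset.mem_coe.mp hq'), heq]
    have h2 : t.card ≤ n ^ (k - 1) := by
      calc t.card ≤ (Finset.univ : Finset (List.Vector (Fin n) (k-1))).card :=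
            Finset.card_image_le
        _ = n ^ (k - 1) := by rw [Finset.card_univ, card_vector, Fintype.card_fin]
    omega
  -- real-valued sum bound
  have hgeom : (∑ k ∈ Finset.range n, l ^ k) ≤ 1 / (1 - l) := by
    have hs : Summable (fun k : ℕ => l ^ k) :=
      summable_geometric_of_lt_one (le_of_lt hl0) hl1
    have h := Summable.sum_le_tsum (Finset.range n) (fun k _ => by positivity) hs
    rwa [tsum_geometric_of_lt_one (le_of_lt hl0) hl1, ← one_div] at h
  have hsum : (∑ k ∈ Finset.range n, ((P k).card : ℝ) * p ^ k) ≤ (1 / (1 - l)) / n := by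
    have hterm : ∀ k ∈ Finset.range n, ((P k).card : ℝ) * p ^ k ≤ l ^ k / n := by
      intro k hk
      rcases Nat.eq_zero_or_pos k with rfl | hk1
      · simp [hP0]
      · have hc : ((P k).card : ℝ) ≤ (n:ℝ) ^ (k-1) := by
          calc ((P k).card : ℝ) ≤ ((n ^ (k-1) : ℕ) : ℝ) := by exact_mod_cast hcard k hk1
            _ = (n:ℝ) ^ (k-1) := by push_cast; ring
        have hppow : p ^ k = l ^ k / (n:ℝ) ^ k := by rw [hpdef, div_pow]
        have hk' : k - 1 + 1 = k := Nat.succ_pred_eq_of_pos hk1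
        have hnk : (n:ℝ) ^ k = (n:ℝ) ^ (k-1) * n := by
          conv_lhs => rw [← hk']
          rw [pow_succ]
        calc ((P k).card : ℝ) * p ^ k ≤ (n:ℝ) ^ (k-1) * (l ^ k / (n:ℝ) ^ k) := by
              rw [hppow]
              apply mul_le_mul_of_nonneg_right hc (by positivity)
          _ = l ^ k / n := by
              rw [hnk]
              have hnn : (n:ℝ) ^ (k-1) ≠ 0 := by positivity
              field_simp
    calc (∑ k ∈ Finset.range n, ((P k).card : ℝ) * p ^ k)
        ≤ ∑ k ∈ Finset.range n, l ^ k / n := Finset.sum_le_sum hterm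
      _ = (∑ k ∈ Finset.range n, l ^ k) / n := by rw [Finset.sum_div]
      _ ≤ (1 / (1 - l)) / n := by gcongr
  -- tie together
  have hENN : erMeasure n p {ω | (graphOf ω).Reachable i j}
      ≤ ENNReal.ofReal ((1 / (1 - l)) / n) := by
    refine hle.trans ?_
    have heq : (∑ k ∈ Finset.range n, ((P k).card : ℝ≥0∞) * (ENNReal.ofReal p) ^ k)
        = ENNReal.ofReal (∑ k ∈ Finset.range n, ((P k).card : ℝ) * p ^ k) := by
      rw [ENNReal.ofReal_sum_of_nonneg (fun k _ => by positivity)]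
      refine Finset.sum_congr rfl fun k _ => ?_
      rw [ENNReal.ofReal_mul (by positivity), ENNReal.ofReal_pow hp0, ENNReal.ofReal_natCast]
    rw [heq]
    exact ENNReal.ofReal_le_ofReal hsum
  calc (erMeasure n p {ω | (graphOf ω).Reachable i j}).toReal
      ≤ (ENNReal.ofReal ((1 / (1 - l)) / n)).toReal :=
        ENNReal.toReal_mono ENNReal.ofReal_ne_top hENN
    _ = (1 / (1 - l)) / n := ENNReal.toReal_ofReal
        (div_nonneg (div_nonneg zero_le_one (by linarith)) (le_of_lt hn0))


/-- Subcritical regime: `P_{n,λ/n}(2 ∈ C(1)) = O(1/n)`. -/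
theorem stmt_13 (l : ℝ) (hl : l ∈ Set.Ioo (0 : ℝ) 1) :
    ∃ C : ℝ, 0 < C ∧ ∀ n : ℕ, ∀ _hn : 2 ≤ n,
      ((erMeasure n (l / n))
          {ω | (graphOf ω).Reachable ⟨0, by omega⟩ ⟨1, by omega⟩}).toReal ≤ C / n := by
  obtain ⟨hl0, hl1⟩ := hl
  refine ⟨1 / (1 - l), one_div_pos.mpr (by linarith), fun n hn => ?_⟩
  exact key hl0 hl1 n hn ⟨0, by omega⟩ ⟨1, by omega⟩ (by simp [Fin.ext_iff])

end ERW
end
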